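/- arXiv:math/0612303 — 2 statements merged into one kernel-verified Lean document; each statement's English description precedes it below -/
import Mathlib

section
/- Let 𝓕 : L²(ℝ, ℂ) → L²(ℝ, ℂ) denote the Fourier–Plancherel unitary transform, let S be the operator of multiplication by x ↦ sign(x), and for c ∈ ℝ let M_c be the unitary operator of multiplication by x ↦ exp(i c x²). For every two negative reals β, β′ < 0, the operator norms coincide: ‖S + M_{−β/2} 𝓕⁻¹ S 𝓕 M_{β/2} − M_{β/2} 𝓕⁻¹ S 𝓕 M_{−β/2}‖ = ‖S + M_{−β′/2} 𝓕⁻¹ S 𝓕 M_{β′/2} − M_{β′/2} 𝓕⁻¹ S 𝓕 M_{−β′/2}‖. (This expresses that the constant in the CCR sign inequality is absolute: all irreducible triples P, Q, R with P + Q + R = 0 and [P,Q] = −i are mutually unitarily equivalent, so ‖sgn P + sgn Q + sgn R‖ does not depend on the parameter.) -/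
/-!
For `l > 0` the dilation `(D_l f)(x) = √l f(l x)` is a unitary of `L²(ℝ)`. It commutes with the
multiplication by `sign`, satisfies `𝓕 D_l = D_{1/l} 𝓕` (so it also commutes with `𝓕⁻¹ S 𝓕`),
and conjugates `M_c` into `M_{c l²}`. Hence conjugation by `D_l` carries the operator built from
the parameter `c` to the one built from `c l²`, and `l = √(β'/β)` carries `β` to `β'`; unitary
conjugation preserves the operator norm.
-/

open MeasureTheory Complex

/-- The continuous linear map underlying a linear isometry equivalence. -/
noncomputable def unitaryCLM {E : Type*} [NormedAddCommGroup E] [NormedSpace ℂ E]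
    (F : E ≃ₗᵢ[ℂ] E) : E →L[ℂ] E :=
  F.toLinearIsometry.toContinuousLinearMap

open scoped ENNReal FourierTransform

noncomputable section

namespace SignCCR

section Algebra

variable {R : Type*}

lemma commute_mul_mul_of_semiconjBy [Monoid R] {f f' a b s : R} (hf'f : f' * f = 1)
    (hff' : f * f' = 1) (h : SemiconjBy f a b) (hb : Commute b s) : Commute a (f' * s * f) := by
  have ha : a = f' * b * f := by rw [mul_assoc, ← h.eq, ← mul_assoc, hf'f, one_mul]
  have hconj : ∀ x y : R, f' * x * f * (f' * y * f) = f' * (x * y) * f := fun x y => by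
    simp only [mul_assoc]; rw [← mul_assoc f f', hff', one_mul]
  rw [ha, Commute, SemiconjBy, hconj, hconj, hb.eq]

/-- With `P = 𝓕⁻¹ S 𝓕` and `U = M`, this is the operator of the theorem at `c = β / 2`. -/
def ccrSignSum [Ring R] (S P : R) (U : ℝ → R) (c : ℝ) : R :=
  S + U (-c) * P * U c - U c * P * U (-c)

lemma semiconjBy_ccrSignSum [Ring R] {u S P : R} {U : ℝ → R} {k : ℝ} (hS : Commute u S)
    (hP : Commute u P) (hU : ∀ c, SemiconjBy u (U c) (U (c * k))) (c : ℝ) :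
    SemiconjBy u (ccrSignSum S P U c) (ccrSignSum S P U (c * k)) := by
  have hneg : SemiconjBy u (U (-c)) (U (-(c * k))) := by rw [← neg_mul]; exact hU (-c)
  exact (SemiconjBy.add_right hS ((hneg.mul_right hP).mul_right (hU c))).sub_right
    (((hU c).mul_right hP).mul_right hneg)

end Algebra

variable {E : Type*} [NormedAddCommGroup E] [NormedSpace ℂ E]

lemma unitaryCLM_mul_symm (e : E ≃ₗᵢ[ℂ] E) : unitaryCLM e * unitaryCLM e.symm = 1 :=
  ContinuousLinearMap.ext e.apply_symm_apply

lemma unitaryCLM_symm_mul (e : E ≃ₗᵢ[ℂ] E) : unitaryCLM e.symm * unitaryCLM e = 1 :=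
  ContinuousLinearMap.ext e.symm_apply_apply

lemma norm_unitaryCLM_mul_mul_symm (e : E ≃ₗᵢ[ℂ] E) (A : E →L[ℂ] E) :
    ‖unitaryCLM e * A * unitaryCLM e.symm‖ = ‖A‖ := by
  change ‖(e : E →L[ℂ] E).comp (A.comp (e.symm : E →L[ℂ] E))‖ = ‖A‖
  rw [ContinuousLinearMap.opNorm_linearIsometryEquiv_comp,
    ContinuousLinearMap.opNorm_comp_linearIsometryEquiv]

lemma ccrSignSum_mul_eq_comp (S F F' : E →L[ℂ] E) (U : ℝ → E →L[ℂ] E) (c : ℝ) :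
    ccrSignSum S (F' * S * F) U c = S + (U (-c)).comp (F'.comp (S.comp (F.comp (U c))))
      - (U c).comp (F'.comp (S.comp (F.comp (U (-c))))) := by
  simp only [ccrSignSum, mul_assoc]; rfl

def dilate (l : ℝ) (f : ℝ → E) : ℝ → E := fun x => (Real.sqrt l : ℂ) • f (l * x)

lemma quasiMeasurePreserving_const_mul {l : ℝ} (hl : l ≠ 0) :
    Measure.QuasiMeasurePreserving (l * ·) (volume : Measure ℝ) volume :=
  ⟨measurable_const_mul l, by
    rw [Real.map_volume_mul_left hl]; exact Measure.smul_absolutelyContinuous⟩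

lemma dilate_congr_ae {l : ℝ} (hl : l ≠ 0) {f g : ℝ → E} (h : f =ᵐ[volume] g) :
    dilate l f =ᵐ[volume] dilate l g :=
  ((quasiMeasurePreserving_const_mul hl).ae_eq_comp h).mono fun x hx => by
    simp only [dilate, Function.comp_apply] at hx ⊢; rw [hx]

lemma dilate_inv_dilate {l : ℝ} (hl : 0 < l) (f : ℝ → E) : dilate l⁻¹ (dilate l f) = f := by
  funext x
  have hsqrt : (Real.sqrt l⁻¹ : ℂ) * Real.sqrt l = 1 := by
    rw [← ofReal_mul, Real.sqrt_inv, inv_mul_cancel₀ (Real.sqrt_pos.2 hl).ne', ofReal_one]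
  simp only [dilate, smul_smul, hsqrt, mul_inv_cancel_left₀ hl.ne', one_smul]

lemma aestronglyMeasurable_dilate {l : ℝ} (hl : l ≠ 0) {f : ℝ → E}
    (hf : AEStronglyMeasurable f volume) : AEStronglyMeasurable (dilate l f) volume :=
  (hf.comp_quasiMeasurePreserving (quasiMeasurePreserving_const_mul hl)).const_smul _

lemma eLpNorm_dilate {l : ℝ} (hl : 0 < l) {f : ℝ → E} (hf : AEStronglyMeasurable f volume) :
    eLpNorm (dilate l f) 2 volume = eLpNorm f 2 volume := by
  have hmap := Real.map_volume_mul_left hl.ne'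
  have hf' : AEStronglyMeasurable f (Measure.map (l * ·) volume) := by
    rw [hmap]; exact hf.mono_ac Measure.smul_absolutelyContinuous
  have hscale :
      ENNReal.ofReal (Real.sqrt l) * ENNReal.ofReal |l⁻¹| ^ (1 / 2 : ℝ≥0∞).toReal = 1 := by
    rw [abs_of_pos (inv_pos.2 hl), ENNReal.ofReal_rpow_of_nonneg (inv_pos.2 hl).le (by norm_num),
      ← ENNReal.ofReal_mul (Real.sqrt_nonneg _), ENNReal.toReal_div, ENNReal.toReal_one,
      ENNReal.toReal_ofNat, ← Real.sqrt_eq_rpow, Real.sqrt_inv,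
      mul_inv_cancel₀ (Real.sqrt_pos.2 hl).ne', ENNReal.ofReal_one]
  calc eLpNorm (dilate l f) 2 volume
      = ENNReal.ofReal (Real.sqrt l) * eLpNorm f 2 (Measure.map (l * ·) volume) := by
        rw [show dilate l f = (Real.sqrt l : ℂ) • (f ∘ (l * ·)) from rfl, eLpNorm_const_smul,
          ← eLpNorm_map_measure hf' (measurable_const_mul l).aemeasurable, ← ofReal_norm,
          norm_real, Real.norm_of_nonneg (Real.sqrt_nonneg _)]
    _ = eLpNorm f 2 volume := by
        rw [hmap, eLpNorm_smul_measure_of_ne_top (by norm_num), smul_eq_mul, ← mul_assoc, hscale,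
          one_mul]

lemma memLp_dilate {l : ℝ} (hl : 0 < l) {f : ℝ → E} (hf : MemLp f 2 volume) :
    MemLp (dilate l f) 2 volume :=
  ⟨aestronglyMeasurable_dilate hl.ne' hf.1, by rw [eLpNorm_dilate hl hf.1]; exact hf.2⟩

lemma dilate_add (l : ℝ) (f g : ℝ → E) : dilate l (f + g) = dilate l f + dilate l g := by
  funext x; simp [dilate, smul_add]

lemma dilate_smul (l : ℝ) (c : ℂ) (f : ℝ → E) : dilate l (c • f) = c • dilate l f := by
  funext x; simp [dilate, smul_comm c]

lemma fourier_comp_const_mul {l : ℝ} (hl : l ≠ 0) (f : ℝ → E) (ξ : ℝ) :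
    𝓕 (fun x => f (l * x)) ξ = |l⁻¹| • 𝓕 f (l⁻¹ * ξ) := by
  rw [Real.fourier_real_eq, Real.fourier_real_eq, ← Measure.integral_comp_mul_left]
  congr 1 with v
  rw [show l * v * (l⁻¹ * ξ) = v * ξ by field_simp]

lemma fourier_dilate {l : ℝ} (hl : 0 < l) (f : ℝ → E) : 𝓕 (dilate l f) = dilate l⁻¹ (𝓕 f) := by
  have hscale : (Real.sqrt l : ℂ) * (|l⁻¹| : ℝ) = (Real.sqrt l⁻¹ : ℝ) := by
    rw [abs_of_pos (inv_pos.2 hl), ← ofReal_mul, ← div_eq_mul_inv, Real.sqrt_div_self',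
      Real.sqrt_inv, one_div]
  have hsmul : 𝓕 (dilate l f) = (Real.sqrt l : ℂ) • 𝓕 (fun x => f (l * x)) :=
    VectorFourier.fourierIntegral_const_smul _ _ _ _ _
  funext ξ
  rw [hsmul, Pi.smul_apply, fourier_comp_const_mul hl.ne', ← Complex.coe_smul,
    smul_smul, hscale]
  rfl

def dilationₗᵢ (l : ℝ) (hl : 0 < l) :
    Lp E 2 (volume : Measure ℝ) →ₗᵢ[ℂ] Lp E 2 (volume : Measure ℝ) where
  toFun f := (memLp_dilate hl (Lp.memLp f)).toLp _
  map_add' f g := by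
    rw [← MemLp.toLp_add]
    exact MemLp.toLp_congr _ _
      ((dilate_congr_ae hl.ne' (Lp.coeFn_add f g)).trans (dilate_add l _ _).eventuallyEq)
  map_smul' c f := by
    rw [RingHom.id_apply, ← MemLp.toLp_const_smul]
    exact MemLp.toLp_congr _ _
      ((dilate_congr_ae hl.ne' (Lp.coeFn_smul c f)).trans (dilate_smul l c _).eventuallyEq)
  norm_map' f := by
    rw [LinearMap.coe_mk, AddHom.coe_mk, Lp.norm_toLp, Lp.norm_def,
      eLpNorm_dilate hl (Lp.aestronglyMeasurable f)]

lemma coeFn_dilationₗᵢ (l : ℝ) (hl : 0 < l) (f : Lp E 2 (volume : Measure ℝ)) :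
    dilationₗᵢ l hl f =ᵐ[volume] dilate l f :=
  MemLp.coeFn_toLp (memLp_dilate hl (Lp.memLp f))

lemma dilationₗᵢ_inv_apply {l : ℝ} (hl : 0 < l) (f : Lp E 2 (volume : Measure ℝ)) :
    dilationₗᵢ l⁻¹ (inv_pos.2 hl) (dilationₗᵢ l hl f) = f :=
  Lp.ext <| (coeFn_dilationₗᵢ _ _ _).trans <|
    (dilate_congr_ae (inv_ne_zero hl.ne') (coeFn_dilationₗᵢ l hl f)).trans
      (dilate_inv_dilate hl f).eventuallyEq

def dilation (l : ℝ) (hl : 0 < l) :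
    Lp E 2 (volume : Measure ℝ) ≃ₗᵢ[ℂ] Lp E 2 (volume : Measure ℝ) :=
  .ofSurjective (dilationₗᵢ l hl) fun f =>
    ⟨dilationₗᵢ l⁻¹ (inv_pos.2 hl) f, by
      simpa using dilationₗᵢ_inv_apply (inv_pos.2 hl) f⟩

lemma coeFn_dilation (l : ℝ) (hl : 0 < l) (f : Lp E 2 (volume : Measure ℝ)) :
    dilation l hl f =ᵐ[volume] dilate l f :=
  coeFn_dilationₗᵢ l hl f

lemma dilation_multiplier_apply {l : ℝ} (hl : 0 < l) {m m' : ℝ → ℂ} (hm : ∀ x, m (l * x) = m' x)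
    {A B : Lp ℂ 2 (volume : Measure ℝ) → Lp ℂ 2 (volume : Measure ℝ)}
    (hA : ∀ f, A f =ᵐ[volume] fun x => m x * f x) (hB : ∀ f, B f =ᵐ[volume] fun x => m' x * f x)
    (f : Lp ℂ 2 (volume : Measure ℝ)) :
    dilation l hl (A f) = B (dilation l hl f) := by
  have hdilate : dilate l (fun x => m x * f x) = fun x => m' x * dilate l f x := by
    funext x; simp only [dilate, smul_eq_mul, hm, mul_left_comm]
  apply Lp.ext
  calc ⇑(dilation l hl (A f)) =ᵐ[volume] dilate l (A f) := coeFn_dilation l hl _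
    _ =ᵐ[volume] fun x => m' x * dilate l f x :=
        (dilate_congr_ae hl.ne' (hA f)).trans hdilate.eventuallyEq
    _ =ᵐ[volume] fun x => m' x * dilation l hl f x :=
        (coeFn_dilation l hl f).mono fun x hx => by simp only [hx]
    _ =ᵐ[volume] B (dilation l hl f) := (hB _).symm

lemma fourier_dilation_of_integrable {F : Lp E 2 (volume : Measure ℝ) ≃ₗᵢ[ℂ] Lp E 2 volume}
    (hF : ∀ f : Lp E 2 (volume : Measure ℝ), Integrable (f : ℝ → E) →
      F f =ᵐ[volume] 𝓕 (f : ℝ → E))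
    {l : ℝ} (hl : 0 < l) {f : Lp E 2 (volume : Measure ℝ)} (hf : Integrable (f : ℝ → E)) :
    F (dilation l hl f) = dilation l⁻¹ (inv_pos.2 hl) (F f) := by
  have hint : Integrable (dilation l hl f : ℝ → E) :=
    (Integrable.smul _ (hf.comp_mul_left' hl.ne')).congr (coeFn_dilation l hl f).symm
  apply Lp.ext
  calc ⇑(F (dilation l hl f)) =ᵐ[volume] 𝓕 (dilation l hl f : ℝ → E) := hF _ hint
    _ = 𝓕 (dilate l f) := funext (Real.fourier_congr_ae (coeFn_dilation l hl f))
    _ = dilate l⁻¹ (𝓕 (f : ℝ → E)) := fourier_dilate hl f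
    _ =ᵐ[volume] dilate l⁻¹ (F f) := (dilate_congr_ae (inv_ne_zero hl.ne') (hF f hf)).symm
    _ =ᵐ[volume] dilation l⁻¹ (inv_pos.2 hl) (F f) := (coeFn_dilation _ _ _).symm

lemma fourier_dilation {F : Lp E 2 (volume : Measure ℝ) ≃ₗᵢ[ℂ] Lp E 2 volume}
    (hF : ∀ f : Lp E 2 (volume : Measure ℝ), Integrable (f : ℝ → E) →
      F f =ᵐ[volume] 𝓕 (f : ℝ → E))
    {l : ℝ} (hl : 0 < l) (f : Lp E 2 (volume : Measure ℝ)) :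
    F (dilation l hl f) = dilation l⁻¹ (inv_pos.2 hl) (F f) := by
  refine congrFun ((F.continuous.comp (dilation l hl).continuous).ext_on
    (Lp.simpleFunc.denseRange (by norm_num)) ((dilation _ _).continuous.comp F.continuous) ?_) f
  rintro _ ⟨s, rfl⟩
  refine fourier_dilation_of_integrable hF hl ?_
  exact ((SimpleFunc.memLp_iff_integrable (by norm_num) (by norm_num)).1
    (Lp.simpleFunc.memLp s)).congr (Lp.simpleFunc.toSimpleFunc_eq_toFun s)

section Operators

local notation "L²" => Lp ℂ 2 (volume : Measure ℝ)

lemma sign_const_mul {l : ℝ} (hl : 0 < l) (x : ℝ) : Real.sign (l * x) = Real.sign x := by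
  rcases lt_trichotomy x 0 with hx | rfl | hx
  · rw [Real.sign_of_neg hx, Real.sign_of_neg (mul_neg_of_pos_of_neg hl hx)]
  · rw [mul_zero]
  · rw [Real.sign_of_pos hx, Real.sign_of_pos (mul_pos hl hx)]

lemma commute_dilation_sign {S : L² →L[ℂ] L²}
    (hS : ∀ f : L², S f =ᵐ[volume] fun x : ℝ => (Real.sign x : ℂ) * f x) {l : ℝ} (hl : 0 < l) :
    Commute (unitaryCLM (dilation l hl)) S :=
  ContinuousLinearMap.ext <|
    dilation_multiplier_apply hl (fun x => by rw [sign_const_mul hl]) hS hS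

lemma semiconjBy_dilation_chirp {M : ℝ → (L² ≃ₗᵢ[ℂ] L²)}
    (hM : ∀ c : ℝ, ∀ f : L², M c f =ᵐ[volume] fun x : ℝ => exp (I * c * x ^ 2) * f x)
    {l : ℝ} (hl : 0 < l) (c : ℝ) :
    SemiconjBy (unitaryCLM (dilation l hl)) (unitaryCLM (M c)) (unitaryCLM (M (c * l ^ 2))) :=
  ContinuousLinearMap.ext <|
    dilation_multiplier_apply hl (fun x => by push_cast; ring_nf) (hM c) (hM _)

lemma semiconjBy_fourier_dilation {F : L² ≃ₗᵢ[ℂ] L²}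
    (hF : ∀ f : L², Integrable (f : ℝ → ℂ) → F f =ᵐ[volume] 𝓕 (f : ℝ → ℂ)) {l : ℝ} (hl : 0 < l) :
    SemiconjBy (unitaryCLM F) (unitaryCLM (dilation l hl))
      (unitaryCLM (dilation l⁻¹ (inv_pos.2 hl))) :=
  ContinuousLinearMap.ext (fourier_dilation hF hl)

lemma commute_dilation_fourier_conj_sign {F : L² ≃ₗᵢ[ℂ] L²}
    (hF : ∀ f : L², Integrable (f : ℝ → ℂ) → F f =ᵐ[volume] 𝓕 (f : ℝ → ℂ))
    {S : L² →L[ℂ] L²} (hS : ∀ f : L², S f =ᵐ[volume] fun x : ℝ => (Real.sign x : ℂ) * f x)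
    {l : ℝ} (hl : 0 < l) :
    Commute (unitaryCLM (dilation l hl)) (unitaryCLM F.symm * S * unitaryCLM F) :=
  commute_mul_mul_of_semiconjBy (unitaryCLM_symm_mul F) (unitaryCLM_mul_symm F)
    (semiconjBy_fourier_dilation hF hl) (commute_dilation_sign hS _)

lemma ccrSignSum_mul_sq_eq_conj_dilation {F : L² ≃ₗᵢ[ℂ] L²}
    (hF : ∀ f : L², Integrable (f : ℝ → ℂ) → F f =ᵐ[volume] 𝓕 (f : ℝ → ℂ))
    {S : L² →L[ℂ] L²} (hS : ∀ f : L², S f =ᵐ[volume] fun x : ℝ => (Real.sign x : ℂ) * f x)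
    {M : ℝ → (L² ≃ₗᵢ[ℂ] L²)}
    (hM : ∀ c : ℝ, ∀ f : L², M c f =ᵐ[volume] fun x : ℝ => exp (I * c * x ^ 2) * f x)
    {l : ℝ} (hl : 0 < l) (c : ℝ) :
    ccrSignSum S (unitaryCLM F.symm * S * unitaryCLM F) (fun c => unitaryCLM (M c)) (c * l ^ 2)
      = unitaryCLM (dilation l hl) *
          ccrSignSum S (unitaryCLM F.symm * S * unitaryCLM F) (fun c => unitaryCLM (M c)) c *
          unitaryCLM (dilation l hl).symm := by
  rw [(semiconjBy_ccrSignSum (commute_dilation_sign hS hl)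
    (commute_dilation_fourier_conj_sign hF hS hl) (semiconjBy_dilation_chirp hM hl) c).eq,
    mul_assoc (ccrSignSum _ _ _ _), unitaryCLM_mul_symm, mul_one]

end Operators

end SignCCR

end

open SignCCR in
/-- For any two negative reals `β, β'`, the operator norms
`‖S + M_{-β/2} 𝓕⁻¹ S 𝓕 M_{β/2} - M_{β/2} 𝓕⁻¹ S 𝓕 M_{-β/2}‖` coincide: the constant in the
CCR sign inequality is absolute, since all irreducible triples `P, Q, R` with `P + Q + R = 0`
and `[P,Q] = -i` are mutually unitarily equivalent. -/
theorem sign_CCR_norm_independent_of_parameter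
    (F : Lp ℂ 2 (volume : Measure ℝ) ≃ₗᵢ[ℂ] Lp ℂ 2 (volume : Measure ℝ))
    (hF : ∀ f : Lp ℂ 2 (volume : Measure ℝ), Integrable (f : ℝ → ℂ) →
      (F f : ℝ → ℂ) =ᵐ[volume] (FourierTransform.fourier (f : ℝ → ℂ) : ℝ → ℂ))
    (S : Lp ℂ 2 (volume : Measure ℝ) →L[ℂ] Lp ℂ 2 (volume : Measure ℝ))
    (hS : ∀ f : Lp ℂ 2 (volume : Measure ℝ),
      (S f : ℝ → ℂ) =ᵐ[volume] fun x : ℝ => (Real.sign x : ℂ) * f x)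
    (M : ℝ → (Lp ℂ 2 (volume : Measure ℝ) ≃ₗᵢ[ℂ] Lp ℂ 2 (volume : Measure ℝ)))
    (hM : ∀ c : ℝ, ∀ f : Lp ℂ 2 (volume : Measure ℝ),
      ((M c) f : ℝ → ℂ) =ᵐ[volume] fun x : ℝ => Complex.exp (Complex.I * c * x ^ 2) * f x)
    (β β' : ℝ) (hβ : β < 0) (hβ' : β' < 0) :
    ‖S + (unitaryCLM (M (-β/2))).comp ((unitaryCLM F.symm).comp (S.comp
          ((unitaryCLM F).comp (unitaryCLM (M (β/2))))))
        - (unitaryCLM (M (β/2))).comp ((unitaryCLM F.symm).comp (S.comp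
          ((unitaryCLM F).comp (unitaryCLM (M (-β/2))))))‖
    = ‖S + (unitaryCLM (M (-β'/2))).comp ((unitaryCLM F.symm).comp (S.comp
          ((unitaryCLM F).comp (unitaryCLM (M (β'/2))))))
        - (unitaryCLM (M (β'/2))).comp ((unitaryCLM F.symm).comp (S.comp
          ((unitaryCLM F).comp (unitaryCLM (M (-β'/2))))))‖ := by
  have hratio : 0 < β' / β := div_pos_of_neg_of_neg hβ' hβ
  have hl : 0 < Real.sqrt (β' / β) := Real.sqrt_pos.2 hratio
  have hscale : β' / 2 = β / 2 * Real.sqrt (β' / β) ^ 2 := by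
    rw [Real.sq_sqrt hratio.le]; field_simp [hβ.ne]
  simp only [neg_div, ← ccrSignSum_mul_eq_comp S (unitaryCLM F) (unitaryCLM F.symm)
    (fun c => unitaryCLM (M c))]
  rw [hscale, ccrSignSum_mul_sq_eq_conj_dilation hF hS hM hl, norm_unitaryCLM_mul_mul_symm]
end

section
/- Let (B_t)_{t∈[0,1]} be a standard Brownian motion: a stochastic process with almost surely continuous sample paths, B₀ = 0, independent increments, and B_t − B_s distributed as a centered Gaussian of variance t − s for 0 ≤ s ≤ t ≤ 1. Then almost surely, the set of local minimizers of the path t ↦ B_t(ω), i.e. the set of t ∈ (0,1) for which there exists ε > 0 with B_t(ω) ≤ B_s(ω) for all s ∈ (t−ε, t+ε) ∩ [0,1], is dense in (0,1). -/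
/-!
On a fixed interval `[p, q] ⊆ [0, 1]` the `n` increments of `B` along a regular grid are
independent centred Gaussians, so they are all nonnegative with probability `2⁻ⁿ`. Hence almost
surely `B` is monotone on no interval with rational endpoints, nor (applying this to `-B`)
antitone on one. A continuous function with no local minimum in an interval is quasiconcave there
(otherwise its minimum over some subinterval would lie in the interior), so it is monotone to the
left and antitone to the right of a maximum point. Every interval therefore contains a local
minimizer.
-/

open MeasureTheory ProbabilityTheory Set Filter
open scoped NNReal ENNReal

section LocalMin

variable {f : ℝ → ℝ} {s : Set ℝ} {a b c : ℝ}

theorem quasiconcaveOn_Icc_of_forall_not_isLocalMin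
    (hf : ContinuousOn f (Icc a b)) (hmin : ∀ c ∈ Ioo a b, ¬IsLocalMin f c) :
    QuasiconcaveOn ℝ (Icc a b) f := by
  intro r
  rw [convex_iff_ordConnected]
  refine ⟨fun x hx z hz y hy => ⟨⟨hx.1.1.trans hy.1, hy.2.trans hz.1.2⟩, ?_⟩⟩
  by_contra! hyr
  obtain ⟨c, hc, hcmin⟩ := isCompact_Icc.exists_isMinOn (nonempty_of_mem hy)
    (hf.mono (Icc_subset_Icc hx.1.1 hz.1.2))
  have hcy : f c < r := (hcmin hy).trans_lt hyr
  have hcx : x < c := hc.1.lt_of_ne fun h => (h ▸ hcy).not_ge hx.2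
  have hcz : c < z := hc.2.lt_of_ne fun h => (h ▸ hcy).not_ge hz.2
  exact hmin c ⟨hx.1.1.trans_lt hcx, hcz.trans_le hz.1.2⟩
    (hcmin.isLocalMin (Icc_mem_nhds hcx hcz))

theorem QuasiconcaveOn.monotoneOn_Icc_of_isMaxOn (hf : QuasiconcaveOn ℝ s f)
    (hmax : IsMaxOn f s c) (ha : a ∈ s) (hc : c ∈ s) : MonotoneOn f (Icc a c) := by
  have hsub : Icc a c ⊆ s := hf.convex.ordConnected.out ha hc
  intro x hx y hy hxy
  exact ((convex_iff_ordConnected.1 (hf (f x))).out ⟨hsub hx, le_rfl⟩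
    ⟨hc, hmax (hsub hx)⟩ ⟨hxy, hy.2⟩).2

theorem QuasiconcaveOn.antitoneOn_Icc_of_isMaxOn (hf : QuasiconcaveOn ℝ s f)
    (hmax : IsMaxOn f s c) (hc : c ∈ s) (hb : b ∈ s) : AntitoneOn f (Icc c b) := by
  have hsub : Icc c b ⊆ s := hf.convex.ordConnected.out hc hb
  intro x hx y hy hxy
  exact ((convex_iff_ordConnected.1 (hf (f y))).out ⟨hc, hmax (hsub hy)⟩
    ⟨hsub hy, le_rfl⟩ ⟨hx.1, hxy⟩).2

theorem exists_isLocalMin_mem_Ioo_of_not_monotoneOn (hab : a < b)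
    (hf : ContinuousOn f (Icc a b))
    (hmono : ∀ p q, a ≤ p → p < q → q ≤ b → ¬MonotoneOn f (Icc p q))
    (hanti : ∀ p q, a ≤ p → p < q → q ≤ b → ¬AntitoneOn f (Icc p q)) :
    ∃ c ∈ Ioo a b, IsLocalMin f c := by
  by_contra! hmin
  have hqc := quasiconcaveOn_Icc_of_forall_not_isLocalMin hf hmin
  obtain ⟨c, hc, hcmax⟩ := isCompact_Icc.exists_isMaxOn (nonempty_Icc.2 hab.le) hf
  rcases hc.1.eq_or_lt with rfl | hac
  · exact hanti a b le_rfl hab le_rfl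
      (hqc.antitoneOn_Icc_of_isMaxOn hcmax hc (right_mem_Icc.2 hab.le))
  · exact hmono a c le_rfl hac hc.2
      (hqc.monotoneOn_Icc_of_isMaxOn hcmax (left_mem_Icc.2 hab.le) hc)

theorem Ioo_subset_closure_setOf_isLocalMin (hf : ContinuousOn f (Icc a b))
    (hmono : ∀ p q, a ≤ p → p < q → q ≤ b → ¬MonotoneOn f (Icc p q))
    (hanti : ∀ p q, a ≤ p → p < q → q ≤ b → ¬AntitoneOn f (Icc p q)) :
    Ioo a b ⊆ closure {c | c ∈ Ioo a b ∧ IsLocalMin f c} := by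
  intro t ht
  rw [Metric.mem_closure_iff]
  intro ε hε
  set d := min b (t + ε / 2)
  have htd : t < d := lt_min ht.2 (by linarith)
  have hdb : d ≤ b := min_le_left _ _
  obtain ⟨c, hc, hcmin⟩ := exists_isLocalMin_mem_Ioo_of_not_monotoneOn htd
    (hf.mono (Icc_subset_Icc ht.1.le hdb))
    (fun p q hp hpq hq => hmono p q (ht.1.le.trans hp) hpq (hq.trans hdb))
    (fun p q hp hpq hq => hanti p q (ht.1.le.trans hp) hpq (hq.trans hdb))
  refine ⟨c, ⟨⟨ht.1.trans hc.1, hc.2.trans_le hdb⟩, hcmin⟩, ?_⟩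
  rw [Real.dist_eq, abs_sub_lt_iff]
  constructor <;> linarith [hc.1, hc.2, min_le_right b (t + ε / 2)]

end LocalMin

theorem gaussianReal_Ici_zero {v : ℝ≥0} (hv : v ≠ 0) : gaussianReal 0 v (Ici 0) = 2⁻¹ := by
  set m := gaussianReal 0 v
  have hsymm : m (Iic 0) = m (Ici 0) := by
    have hmap : m.map (fun x => -x) = m := by
      simpa using gaussianReal_map_neg (μ := 0) (v := v)
    conv_lhs => rw [← hmap]
    rw [Measure.map_apply measurable_neg measurableSet_Iic]
    simp
  have hsum : m (Ici 0) + m (Iic 0) = 1 := by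
    have h := measure_union_add_inter (μ := m) (Ici (0 : ℝ)) (measurableSet_Iic (a := 0))
    rw [Ici_union_Iic, Ici_inter_Iic, Icc_self, measure_univ,
      (gaussianReal_absolutelyContinuous 0 hv) (Real.volume_singleton), add_zero] at h
    exact h.symm
  rw [hsymm, ← two_mul] at hsum
  exact ENNReal.eq_inv_of_mul_eq_one_left (by rwa [mul_comm])

section GaussianIncrements

variable {Ω : Type*} [MeasurableSpace Ω]

structure HasIndepGaussianIncrements (P : Measure Ω) (B : ℝ → Ω → ℝ) : Prop where
  measurable : ∀ t, Measurable (B t)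
  iIndepFun_increments : ∀ (n : ℕ) (t : Fin (n + 1) → ℝ), Monotone t →
    (∀ i, t i ∈ Icc (0 : ℝ) 1) →
    iIndepFun (fun i : Fin n => fun ω => B (t i.succ) ω - B (t i.castSucc) ω) P
  map_sub : ∀ s t : ℝ, 0 ≤ s → s ≤ t → t ≤ 1 →
    Measure.map (fun ω => B t ω - B s ω) P = gaussianReal 0 (t - s).toNNReal

namespace HasIndepGaussianIncrements

variable {P : Measure Ω} {B : ℝ → Ω → ℝ}

theorem neg (hB : HasIndepGaussianIncrements P B) : HasIndepGaussianIncrements P (-B) where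
  measurable t := (hB.measurable t).neg
  iIndepFun_increments n t ht ht01 := by
    convert (hB.iIndepFun_increments n t ht ht01).comp (fun _ x => -x) fun _ => measurable_neg
      using 2 with i
    ext ω
    simp only [Pi.neg_apply, Function.comp_apply]
    ring
  map_sub s t hs hst ht := by
    have hcomp :
        (fun ω => (-B) t ω - (-B) s ω) = (fun x => -x) ∘ fun ω => B t ω - B s ω := by
      ext ω
      simp only [Pi.neg_apply, Function.comp_apply]
      ring
    have hX : Measurable fun ω => B t ω - B s ω := (hB.measurable t).sub (hB.measurable s)
    rw [hcomp, ← Measure.map_map measurable_neg hX,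
      hB.map_sub s t hs hst ht, gaussianReal_map_neg, neg_zero]

theorem measure_setOf_forall_castSucc_le_succ (hB : HasIndepGaussianIncrements P B) {n : ℕ}
    {t : Fin (n + 1) → ℝ} (ht : StrictMono t) (ht01 : ∀ i, t i ∈ Icc (0 : ℝ) 1) :
    P {ω | ∀ i : Fin n, B (t i.castSucc) ω ≤ B (t i.succ) ω} = 2⁻¹ ^ n := by
  have hset : {ω | ∀ i : Fin n, B (t i.castSucc) ω ≤ B (t i.succ) ω} =
      ⋂ i : Fin n, (fun ω => B (t i.succ) ω - B (t i.castSucc) ω) ⁻¹' Ici 0 := by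
    ext ω
    simp [sub_nonneg]
  have hhalf : ∀ i : Fin n,
      P ((fun ω => B (t i.succ) ω - B (t i.castSucc) ω) ⁻¹' Ici 0) = 2⁻¹ := by
    intro i
    have hX : Measurable fun ω => B (t i.succ) ω - B (t i.castSucc) ω :=
      (hB.measurable _).sub (hB.measurable _)
    rw [← Measure.map_apply hX measurableSet_Ici,
      hB.map_sub _ _ (ht01 _).1 (ht.monotone (Fin.castSucc_le_succ i)) (ht01 _).2,
      gaussianReal_Ici_zero]
    simpa using ht (Fin.castSucc_lt_succ (i := i))
  rw [hset, (hB.iIndepFun_increments n t ht.monotone ht01).meas_iInter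
    fun i => ⟨Ici 0, measurableSet_Ici, rfl⟩]
  simp [hhalf]

theorem ae_not_monotoneOn (hB : HasIndepGaussianIncrements P B) {p q : ℝ} (hp : 0 ≤ p)
    (hpq : p < q) (hq : q ≤ 1) : ∀ᵐ ω ∂P, ¬MonotoneOn (fun t => B t ω) (Icc p q) := by
  rw [ae_iff]
  simp only [not_not]
  refine le_antisymm (ge_of_tendsto' (ENNReal.tendsto_pow_atTop_nhds_zero_of_lt_one
    (by norm_num : (2⁻¹ : ℝ≥0∞) < 1)) fun n => ?_) zero_le
  set t : Fin (n + 1) → ℝ := fun i => p + (q - p) * (i / (n + 1))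
  have ht : StrictMono t := fun i j hij => by
    have hij' : ((i : ℕ) : ℝ) < (j : ℕ) := by exact_mod_cast hij
    simp only [t]
    gcongr
  have htpq : ∀ i, t i ∈ Icc p q := fun i => by
    have h1 : ((i : ℕ) : ℝ) / (n + 1) ≤ 1 :=
      div_le_one_of_le₀ (by exact_mod_cast i.is_le.trans n.le_succ) (by positivity)
    constructor <;> nlinarith [show (0 : ℝ) ≤ (i : ℕ) / (n + 1) by positivity]
  calc P {ω | MonotoneOn (fun t => B t ω) (Icc p q)}
      ≤ P {ω | ∀ i : Fin n, B (t i.castSucc) ω ≤ B (t i.succ) ω} :=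
        measure_mono fun ω hω i =>
          hω (htpq _) (htpq _) (ht.monotone (Fin.castSucc_le_succ i))
    _ = 2⁻¹ ^ n :=
        hB.measure_setOf_forall_castSucc_le_succ ht fun i => Icc_subset_Icc hp hq (htpq i)

theorem ae_forall_not_monotoneOn (hB : HasIndepGaussianIncrements P B) :
    ∀ᵐ ω ∂P, ∀ p q : ℝ, 0 ≤ p → p < q → q ≤ 1 →
      ¬MonotoneOn (fun t => B t ω) (Icc p q) := by
  have hrat : ∀ᵐ ω ∂P, ∀ p q : ℚ, 0 ≤ (p : ℝ) → (p : ℝ) < q → (q : ℝ) ≤ 1 →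
      ¬MonotoneOn (fun t => B t ω) (Icc p q) := by
    simp only [ae_all_iff, eventually_imp_distrib_left]
    exact fun p q => hB.ae_not_monotoneOn
  filter_upwards [hrat] with ω hω p q hp hpq hq hmono
  obtain ⟨p', hpp', hp'q⟩ := exists_rat_btwn hpq
  obtain ⟨q', hp'q', hq'q⟩ := exists_rat_btwn hp'q
  exact hω p' q' (hp.trans hpp'.le) hp'q' (hq'q.le.trans hq)
    (hmono.mono (Icc_subset_Icc hpp'.le hq'q.le))

end HasIndepGaussianIncrements

end GaussianIncrements

theorem brownian_local_minimizers_dense_general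
    {Ω : Type*} [MeasurableSpace Ω] (P : Measure Ω)
    (B : ℝ → Ω → ℝ)
    (hmeas : ∀ t : ℝ, Measurable (B t))
    (hcont : ∀ᵐ ω ∂P, ContinuousOn (fun t => B t ω) (Set.Icc 0 1))
    (hindep : ∀ (n : ℕ) (t : Fin (n + 1) → ℝ), Monotone t →
      (∀ i, t i ∈ Set.Icc (0 : ℝ) 1) →
      iIndepFun
        (fun i : Fin n => fun ω => B (t i.succ) ω - B (t i.castSucc) ω) P)
    (hgauss : ∀ s t : ℝ, 0 ≤ s → s ≤ t → t ≤ 1 →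
      Measure.map (fun ω => B t ω - B s ω) P = gaussianReal 0 (t - s).toNNReal) :
    ∀ᵐ ω ∂P, Set.Ioo (0 : ℝ) 1 ⊆
      closure {t : ℝ | t ∈ Set.Ioo (0 : ℝ) 1 ∧
        ∃ ε > (0 : ℝ), ∀ s ∈ Set.Ioo (t - ε) (t + ε) ∩ Set.Icc (0 : ℝ) 1,
          B t ω ≤ B s ω} := by
  have hB : HasIndepGaussianIncrements P B := ⟨hmeas, hindep, hgauss⟩
  filter_upwards [hcont, hB.ae_forall_not_monotoneOn, hB.neg.ae_forall_not_monotoneOn]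
    with ω hc hmono hanti
  refine (Ioo_subset_closure_setOf_isLocalMin hc hmono
    fun p q hp hpq hq h => hanti p q hp hpq hq h.neg).trans (closure_mono ?_)
  rintro c ⟨hc01, hcmin⟩
  obtain ⟨ε, hε, hball⟩ := Metric.eventually_nhds_iff_ball.1 hcmin
  exact ⟨hc01, ε, hε, fun s hs => hball s (Real.ball_eq_Ioo c ε ▸ hs.1)⟩

/-- For a standard Brownian motion `(B t)_{t ∈ [0,1]}` (a.s. continuous paths, `B 0 = 0`,
independent increments, `B t - B s` centered Gaussian of variance `t - s`), almost surely the
set of local minimizers of the path `t ↦ B t ω` is dense in `(0,1)`. -/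
theorem brownian_local_minimizers_dense
    {Ω : Type*} [MeasurableSpace Ω] (P : Measure Ω) [IsProbabilityMeasure P]
    (B : ℝ → Ω → ℝ)
    (hmeas : ∀ t : ℝ, Measurable (B t))
    (h0 : ∀ᵐ ω ∂P, B 0 ω = 0)
    (hcont : ∀ᵐ ω ∂P, ContinuousOn (fun t => B t ω) (Set.Icc 0 1))
    (hindep : ∀ (n : ℕ) (t : Fin (n + 1) → ℝ), Monotone t →
      (∀ i, t i ∈ Set.Icc (0 : ℝ) 1) →
      iIndepFun
        (fun i : Fin n => fun ω => B (t i.succ) ω - B (t i.castSucc) ω) P)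
    (hgauss : ∀ s t : ℝ, 0 ≤ s → s ≤ t → t ≤ 1 →
      Measure.map (fun ω => B t ω - B s ω) P = gaussianReal 0 (t - s).toNNReal) :
    ∀ᵐ ω ∂P, Set.Ioo (0 : ℝ) 1 ⊆
      closure {t : ℝ | t ∈ Set.Ioo (0 : ℝ) 1 ∧
        ∃ ε > (0 : ℝ), ∀ s ∈ Set.Ioo (t - ε) (t + ε) ∩ Set.Icc (0 : ℝ) 1,
          B t ω ≤ B s ω} :=
  brownian_local_minimizers_dense_general P B hmeas hcont hindep hgauss
end
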